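/- arXiv:2010.06360 — 2 statements merged into one kernel-verified Lean document; each statement's English description precedes it below -/
import Mathlib

section
/- Let H be a real inner product space and F : H → H satisfy ⟨x, F(x)⟩ ≤ 0 for all x (dissipativity). Fix d with 0 ≤ d ≤ 1 and Δt > 0, and suppose u^{n−1}, uⁿ, uⁿ⁺¹, y⁽²⁾ in H satisfy y⁽²⁾ = d·u^{n−1} + (1−d)uⁿ + Δt·F(y⁽²⁾) and uⁿ⁺¹ = (1/(3−2d))(2y⁽²⁾ + 2(1−d)uⁿ − u^{n−1}). Define Xⁿ = (uⁿ, u^{n−1}) and the G-norm ‖X‖²_G = XᵀGX with G = (1/4)[[2d²−7d+6, −(2d−3)(d−1)], [−(2d−3)(d−1), 2d²−3d+2]] (acting blockwise via inner products). Then ‖Xⁿ⁺¹‖²_G ≤ ‖Xⁿ‖²_G − ((2d−3)(d−1)/4)·‖uⁿ⁺¹ − 2uⁿ + u^{n−1}‖², and in particular ‖Xⁿ⁺¹‖²_G ≤ ‖Xⁿ‖²_G, so the IE-Filt(d) method is energy stable. -/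
/-!
Solving the post-filter for the stage value gives
`y⁽²⁾ = ((3-2d)/2) uⁿ⁺¹ + (d-1) uⁿ + ½ u^{n-1}`. Expanding inner products, the increment of the
G-norm plus the numerical dissipation `(2d-3)(d-1)/4 ‖uⁿ⁺¹ - 2uⁿ + u^{n-1}‖²` is exactly
`⟪y⁽²⁾, y⁽²⁾ - y⁽¹⁾⟫ = Δt ⟪y⁽²⁾, F y⁽²⁾⟫ ≤ 0`. For `d ≤ 1` the dissipation coefficient is
nonnegative, which gives both inequalities.
-/

open RealInnerProductSpace

namespace IEFilt

variable {H : Type*} [NormedAddCommGroup H] [InnerProductSpace ℝ H]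

/-- `XᵀGX` for `X = (a, b)`, with the G-matrix of IE-Filt(d). -/
noncomputable def gNormSq (d : ℝ) (a b : H) : ℝ :=
  ((2*d^2 - 7*d + 6)/4) * ‖a‖^2 + 2 * (-(2*d-3)*(d-1)/4) * ⟪a, b⟫
    + ((2*d^2 - 3*d + 2)/4) * ‖b‖^2

theorem stage_eq_of_postFilter {d : ℝ} (hd : 3 - 2*d ≠ 0) {um un un1 y2 : H}
    (hout : un1 = (1 / (3 - 2*d)) • ((2:ℝ) • y2 + (2*(1-d)) • un - um)) :
    y2 = ((3 - 2*d)/2) • un1 + (d - 1) • un + (1/2 : ℝ) • um := by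
  have hmul : (3 - 2*d) • un1 = (2:ℝ) • y2 + (2*(1-d)) • un - um := by
    rw [hout, smul_smul, mul_one_div_cancel hd, one_smul]
  calc y2 = (1/2 : ℝ) • ((2:ℝ) • y2 + (2*(1-d)) • un - um) + (d - 1) • un + (1/2 : ℝ) • um := by
        module
    _ = _ := by rw [← hmul]; module

theorem inner_sub_nonpos_of_implicitEuler {F : H → H} (hF : ∀ x : H, ⟪x, F x⟫ ≤ 0)
    {Δt : ℝ} (hΔt : 0 ≤ Δt) {x y : H} (hy : y = x + Δt • F y) :
    ⟪y, y - x⟫ ≤ 0 := by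
  have hstep : y - x = Δt • F y := by rw [sub_eq_iff_eq_add', ← hy]
  rw [hstep, real_inner_smul_right]
  exact mul_nonpos_of_nonneg_of_nonpos hΔt (hF y)

theorem gNormSq_energy_identity (d : ℝ) (um un un1 : H) :
    let y2 := ((3 - 2*d)/2) • un1 + (d - 1) • un + (1/2 : ℝ) • um
    gNormSq d un1 un = gNormSq d un um - ((2*d-3)*(d-1)/4) * ‖un1 - (2:ℝ) • un + um‖^2
      + ⟪y2, y2 - (d • um + (1 - d) • un)⟫ := by
  simp only [gNormSq, ← real_inner_self_eq_norm_sq, inner_add_left, inner_add_right,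
    inner_sub_left, inner_sub_right, real_inner_smul_left, real_inner_smul_right,
    real_inner_comm un un1, real_inner_comm um un1, real_inner_comm um un]
  ring

theorem gNormSq_le_sub_of_step {F : H → H} (hF : ∀ x : H, ⟪x, F x⟫ ≤ 0)
    {d Δt : ℝ} (hd : d ≤ 1) (hΔt : 0 ≤ Δt) {um un un1 y2 : H}
    (hy2 : y2 = d • um + (1 - d) • un + Δt • F y2)
    (hout : un1 = (1 / (3 - 2*d)) • ((2:ℝ) • y2 + (2*(1-d)) • un - um)) :
    gNormSq d un1 un
      ≤ gNormSq d un um - ((2*d-3)*(d-1)/4) * ‖un1 - (2:ℝ) • un + um‖^2 := by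
  have hstage := stage_eq_of_postFilter (by linarith) hout
  have hdiss := inner_sub_nonpos_of_implicitEuler hF hΔt hy2
  rw [hstage] at hdiss
  linarith [gNormSq_energy_identity d um un un1]

end IEFilt

open IEFilt in
theorem stmt_7_general {H : Type*} [NormedAddCommGroup H] [InnerProductSpace ℝ H]
    (F : H → H) (hF : ∀ x : H, ⟪x, F x⟫ ≤ 0)
    (d Δt : ℝ) (hd1 : d ≤ 1) (hΔt : 0 < Δt)
    (um un un1 y2 : H)
    (hy2 : y2 = d • um + (1 - d) • un + Δt • F y2)
    (hout : un1 = (1 / (3 - 2*d)) • ((2:ℝ) • y2 + (2*(1-d)) • un - um)) :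
    ((2*d^2 - 7*d + 6)/4) * ‖un1‖^2 + 2 * (-(2*d-3)*(d-1)/4) * ⟪un1, un⟫
        + ((2*d^2 - 3*d + 2)/4) * ‖un‖^2
      ≤ ((2*d^2 - 7*d + 6)/4) * ‖un‖^2 + 2 * (-(2*d-3)*(d-1)/4) * ⟪un, um⟫
          + ((2*d^2 - 3*d + 2)/4) * ‖um‖^2
        - ((2*d-3)*(d-1)/4) * ‖un1 - (2:ℝ) • un + um‖^2 ∧
    ((2*d^2 - 7*d + 6)/4) * ‖un1‖^2 + 2 * (-(2*d-3)*(d-1)/4) * ⟪un1, un⟫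
        + ((2*d^2 - 3*d + 2)/4) * ‖un‖^2
      ≤ ((2*d^2 - 7*d + 6)/4) * ‖un‖^2 + 2 * (-(2*d-3)*(d-1)/4) * ⟪un, um⟫
          + ((2*d^2 - 3*d + 2)/4) * ‖um‖^2 := by
  show gNormSq d un1 un ≤ gNormSq d un um - ((2*d-3)*(d-1)/4) * ‖un1 - (2:ℝ) • un + um‖^2 ∧
    gNormSq d un1 un ≤ gNormSq d un um
  have hstep := gNormSq_le_sub_of_step hF hd1 hΔt.le hy2 hout
  have hdiss : 0 ≤ ((2*d-3)*(d-1)/4) * ‖un1 - (2:ℝ) • un + um‖^2 :=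
    mul_nonneg (by nlinarith) (sq_nonneg _)
  exact ⟨hstep, by linarith⟩

/-- Energy stability of the IE-Filt(d) method in the G-norm. -/
theorem stmt_7 {H : Type*} [NormedAddCommGroup H] [InnerProductSpace ℝ H]
    (F : H → H) (hF : ∀ x : H, ⟪x, F x⟫ ≤ 0)
    (d Δt : ℝ) (hd0 : 0 ≤ d) (hd1 : d ≤ 1) (hΔt : 0 < Δt)
    (um un un1 y2 : H)
    (hy2 : y2 = d • um + (1 - d) • un + Δt • F y2)
    (hout : un1 = (1 / (3 - 2*d)) • ((2:ℝ) • y2 + (2*(1-d)) • un - um)) :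
    ((2*d^2 - 7*d + 6)/4) * ‖un1‖^2 + 2 * (-(2*d-3)*(d-1)/4) * ⟪un1, un⟫
        + ((2*d^2 - 3*d + 2)/4) * ‖un‖^2
      ≤ ((2*d^2 - 7*d + 6)/4) * ‖un‖^2 + 2 * (-(2*d-3)*(d-1)/4) * ⟪un, um⟫
          + ((2*d^2 - 3*d + 2)/4) * ‖um‖^2
        - ((2*d-3)*(d-1)/4) * ‖un1 - (2:ℝ) • un + um‖^2 ∧
    ((2*d^2 - 7*d + 6)/4) * ‖un1‖^2 + 2 * (-(2*d-3)*(d-1)/4) * ⟪un1, un⟫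
        + ((2*d^2 - 3*d + 2)/4) * ‖un‖^2
      ≤ ((2*d^2 - 7*d + 6)/4) * ‖un‖^2 + 2 * (-(2*d-3)*(d-1)/4) * ⟪un, um⟫
          + ((2*d^2 - 3*d + 2)/4) * ‖um‖^2 :=
  stmt_7_general F hF d Δt hd1 hΔt um un un1 y2 hy2 hout
end

section
/- The IE-Pre-Post-3 output formula is exact on cubics combined with one derivative evaluation: q(1) = (2/11)q(−2) − (9/11)q(−1) + (18/11)q(0) + (6/11)q'(1) holds for all polynomials q with deg q ≤ 3. -/
/-- The condensed IE-Pre-Post-3 output formula is exact on cubics. -/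
theorem stmt_14 (q : Polynomial ℝ) (hq : q.degree ≤ 3) :
    q.eval 1 = (2/11) * q.eval (-2) - (9/11) * q.eval (-1) + (18/11) * q.eval 0
        + (6/11) * (Polynomial.derivative q).eval 1 := by
  have h3 : q.natDegree ≤ 3 := Polynomial.natDegree_le_iff_degree_le.mpr hq
  have h4 : q.natDegree < 4 := by omega
  have hd4 : (Polynomial.derivative q).natDegree < 4 := by
    have := Polynomial.natDegree_derivative_le q
    omega
  have hc4 : q.coeff 4 = 0 := Polynomial.coeff_eq_zero_of_natDegree_lt (by omega)
  rw [Polynomial.eval_eq_sum_range' h4, Polynomial.eval_eq_sum_range' h4,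
    Polynomial.eval_eq_sum_range' h4, Polynomial.eval_eq_sum_range' h4,
    Polynomial.eval_eq_sum_range' hd4]
  simp [Finset.sum_range_succ, Polynomial.coeff_derivative, hc4]
  ring
end
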